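/- arXiv:1807.06162 — 7 statements merged into one kernel-verified Lean document; each statement's English description precedes it below -/
import Mathlib

section
/- Suppose x : ℤ×ℤ → ℂ satisfies the H3_{δ=0} lattice equation for all l,m (with all relevant denominators nonzero). Define w_{l+1,m+1} := x_{l,m}/(α x_{l,m+1} - β x_{l+1,m}). Then w satisfies w_{l+1,m+1} = w_{l,m} / ((β² - α²)(w_{l,m+1} - w_{l+1,m}) w_{l,m} + 1) wherever all denominators are nonzero. -/
set_option maxHeartbeats 2000000 in

lemma h3_key (α β a b c d e p q r : ℂ)
    (h1 : β*c - α*b ≠ 0)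
    (h2 : β*p - α*d ≠ 0)
    (h3 : β*e - α*p ≠ 0)
    (h4 : α*q - β*r ≠ 0)
    (hw1 : α*b - β*c ≠ 0)
    (hw2 : α*d - β*p ≠ 0)
    (hw3 : α*p - β*e ≠ 0)
    (hp : p = a*(α*c - β*b)/(β*c - α*b))
    (hq : q = b*(α*p - β*d)/(β*p - α*d))
    (hr : r = c*(α*e - β*p)/(β*e - α*p))
    (hD : (β^2-α^2)*(b/(α*d-β*p) - c/(α*p-β*e))*(a/(α*b-β*c)) + 1 ≠ 0) :
    p/(α*q-β*r) = (a/(α*b-β*c))/((β^2-α^2)*(b/(α*d-β*p) - c/(α*p-β*e))*(a/(α*b-β*c)) + 1) := by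
  rw [hq, hr] at h4 ⊢
  have k2 : β*p - α*d = -(α*d-β*p) := by ring
  have k3 : β*e - α*p = -(α*p-β*e) := by ring
  rw [k2, k3] at h4 ⊢
  rw [div_eq_div_iff h4 hD]
  have e1 : p * (α*b-β*c) = a*(β*b-α*c) := by
    rw [hp, div_mul_eq_mul_div, div_eq_iff h1]; ring
  generalize hu : α*d-β*p = u at *
  generalize hv : α*p-β*e = v at *
  field_simp
  linear_combination (u*v) * e1 - a*β*b*v * hu + a*α*c*u * hv

/-- the variable w_{l+1,m+1} = x_{l,m}/(α x_{l,m+1} - β x_{l+1,m}) built from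
a solution of H3_{δ=0} satisfies w_{l+1,m+1} = w_{l,m}/((β²-α²)(w_{l,m+1}-w_{l+1,m})w_{l,m}+1). -/
theorem h3_w_transformation (α β : ℂ) (hα : α ≠ 0) (hβ : β ≠ 0)
    (hαβ : α ≠ β) (hαβ' : α ≠ -β)
    (x w : ℤ → ℤ → ℂ)
    (hH3 : ∀ l m : ℤ, β * x (l+1) m - α * x l (m+1) ≠ 0 ∧
      x (l+1) (m+1) =
        x l m * (α * x (l+1) m - β * x l (m+1)) / (β * x (l+1) m - α * x l (m+1)))
    (hw : ∀ l m : ℤ, α * x l (m+1) - β * x (l+1) m ≠ 0 ∧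
      w (l+1) (m+1) = x l m / (α * x l (m+1) - β * x (l+1) m))
    (l m : ℤ)
    (hd : (β ^ 2 - α ^ 2) * (w l (m+1) - w (l+1) m) * w l m + 1 ≠ 0) :
    w (l+1) (m+1) =
      w l m / ((β ^ 2 - α ^ 2) * (w l (m+1) - w (l+1) m) * w l m + 1) := by
  have H1 := hH3 (l-1) (m-1)
  have H2 := hH3 (l-1) m
  have H3 := hH3 l (m-1)
  have Hw1 := hw (l-1) (m-1)
  have Hw2 := hw (l-1) m
  have Hw3 := hw l (m-1)
  have Hw4 := hw l m
  simp only [sub_add_cancel] at H1 H2 H3 Hw1 Hw2 Hw3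
  rw [Hw1.2, Hw2.2, Hw3.2] at hd ⊢
  rw [Hw4.2]
  exact h3_key α β (x (l-1) (m-1)) (x (l-1) m) (x l (m-1)) (x (l-1) (m+1)) (x (l+1) (m-1))
    (x l m) (x l (m+1)) (x (l+1) m)
    H1.1 H2.1 H3.1 Hw4.1 Hw1.1 Hw2.1 Hw3.1 H1.2 H2.2 H3.2 hd
end

section
/- Suppose x : ℤ×ℤ → ℂ satisfies the Q3_{δ=0} lattice equation for all l,m (with all relevant denominators nonzero). Define w_{l+1,m+1} := (x_{l,m} - α x_{l+1,m})/(x_{l,m} - β x_{l,m+1}) and r := (α² - 1)/(β² - 1). Then w satisfies w_{l+1,m+1} = w_{l,m} (w_{l+1,m} - 1)(w_{l,m+1} - r) / ((w_{l,m+1} - 1)(w_{l+1,m} - r)) wherever all denominators are nonzero. -/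
private lemma frac_aux (A B C D E F G H K : ℂ) (hB : B ≠ 0) (hD : D ≠ 0) (hF : F ≠ 0)
    (hH : H ≠ 0) (hG : G ≠ 0) (hK : K ≠ 0) :
    A / B * (C / D * (E / (F * H))) / (G / F * (K / (D * H))) = A * (C * E) / (B * (G * K)) := by
  rw [eq_div_iff (mul_ne_zero hB (mul_ne_zero hG hK))]
  field_simp


set_option maxHeartbeats 2000000 in
set_option maxRecDepth 4000 in
/-- the variable w_{l+1,m+1} = (x_{l,m} - α x_{l+1,m})/(x_{l,m} - β x_{l,m+1})
built from a solution of Q3_{δ=0} satisfies equation (3.8) of the paper with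
r = (α²-1)/(β²-1). -/
theorem q3_w_transformation (α β : ℂ) (hα : α ≠ 0) (hβ : β ≠ 0)
    (hα1 : α ≠ 1) (hα1' : α ≠ -1) (hβ1 : β ≠ 1) (hβ1' : β ≠ -1)
    (hαβ : α ^ 2 ≠ β ^ 2)
    (x w : ℤ → ℤ → ℂ)
    (hQ3 : ∀ l m : ℤ,
      (β ^ 2 - α ^ 2) * (x l m * x (l+1) (m+1) + x (l+1) m * x l (m+1))
        + β * (α ^ 2 - 1) * (x l m * x (l+1) m + x l (m+1) * x (l+1) (m+1))
        - α * (β ^ 2 - 1) * (x l m * x l (m+1) + x (l+1) m * x (l+1) (m+1)) = 0)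
    (hw : ∀ l m : ℤ, x l m - β * x l (m+1) ≠ 0 ∧
      w (l+1) (m+1) = (x l m - α * x (l+1) m) / (x l m - β * x l (m+1)))
    (l m : ℤ)
    (hd1 : w l (m+1) - 1 ≠ 0)
    (hd2 : w (l+1) m - (α ^ 2 - 1) / (β ^ 2 - 1) ≠ 0) :
    w (l+1) (m+1) =
      w l m * ((w (l+1) m - 1) * (w l (m+1) - (α ^ 2 - 1) / (β ^ 2 - 1))) /
        ((w l (m+1) - 1) * (w (l+1) m - (α ^ 2 - 1) / (β ^ 2 - 1))) := by
  have el : l - 1 + 1 = l := by ring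
  have em : m - 1 + 1 = m := by ring
  obtain ⟨hD00, hw00⟩ := hw (l-1) (m-1)
  obtain ⟨hD10, hw10⟩ := hw l (m-1)
  obtain ⟨hD01, hw01⟩ := hw (l-1) m
  obtain ⟨hD11, hw11⟩ := hw l m
  rw [el, em] at hw00
  rw [em] at hw10 hD00 hD10
  rw [el] at hw01
  have hQ1 := hQ3 (l-1) (m-1)
  have hQ2 := hQ3 l (m-1)
  have hQ3' := hQ3 (l-1) m
  rw [el, em] at hQ1
  rw [em] at hQ2
  rw [el] at hQ3'
  set a := x (l-1) (m-1) with ha'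
  set b := x l (m-1) with hb'
  set c := x (l+1) (m-1) with hc'
  set d := x (l-1) m with hd'
  set e := x l m with he'
  set f := x (l+1) m with hf'
  set g := x (l-1) (m+1) with hg'
  set h := x l (m+1) with hh'
  -- basic nonzero facts
  have hb2 : (β ^ 2 - 1 : ℂ) ≠ 0 := by
    have h1 : β - 1 ≠ 0 := sub_ne_zero.mpr hβ1
    have h2 : β + 1 ≠ 0 := fun H => hβ1' (by linear_combination H)
    intro H; exact (mul_ne_zero h1 h2) (by linear_combination H)
  have hge : β * g - α * e ≠ 0 := by
    have h1 : w l (m+1) - 1 = (β * g - α * e) / (d - β * g) := by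
      rw [hw01]; field_simp; ring
    intro H
    exact hd1 (by rw [h1, H, zero_div])
  have hNb : (β^2 - α^2) * b + β * (α^2 - 1) * e - α * (β^2 - 1) * c ≠ 0 := by
    have h1 : w (l+1) m - (α ^ 2 - 1) / (β ^ 2 - 1)
        = ((β^2 - α^2) * b + β * (α^2 - 1) * e - α * (β^2 - 1) * c) / ((b - β * e) * (β^2 - 1)) := by
      rw [hw10]; field_simp; ring
    intro H
    exact hd2 (by rw [h1, H, zero_div])
  -- the key polynomial identity
  have hP : ((β^2 - α^2) * b + β * (α^2 - 1) * e - α * (β^2 - 1) * c) *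
      ((e - α*f) * ((β*g - α*e) * (((β^2 - α^2)*b + β*(α^2-1)*e - α*(β^2-1)*c) * (a - β*d))))
      = ((β^2 - α^2) * b + β * (α^2 - 1) * e - α * (β^2 - 1) * c) *
      ((a - α*b) * ((β*e - α*c) * (((β^2 - α^2)*d + β*(α^2-1)*g - α*(β^2-1)*e) * (e - β*h)))) := by
    linear_combination
      (β^3*e^2*g - β^4*b*e*g - α*β^2*e^3 - 2*α*β^2*c*e*g + α*β^3*b*e^2 + α*β^3*b*c*g + α*β^4*c*e*g + 2*α^2*β*c*e^2 + α^2*β*c^2*g + α^2*β^2*b*e*g - α^2*β^2*b*c*e - α^2*β^3*e^2*g - α^2*β^3*c*e^2 - α^2*β^3*c^2*g - α^3*c^2*e - α^3*β*b*e^2 - α^3*β*b*c*g + α^3*β^2*e^3 + α^3*β^2*c*e*g + α^3*β^2*c^2*e + α^4*b*c*e - α^4*β*c*e^2) * hQ1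
      + (α*β^2*a*e*g - α*β^3*d*e*g - α*β^3*a*b*g + α*β^4*b*d*g - α^2*β*a*e^2 - α^2*β*a*c*g + α^2*β^2*d*e^2 + α^2*β^2*c*d*g + α^2*β^2*a*b*e - α^2*β^3*b*d*e + α^2*β^3*a*c*g - α^2*β^4*c*d*g + α^3*a*c*e - α^3*β*c*d*e + α^3*β*a*b*g - α^3*β^2*b*d*g - α^3*β^2*a*e*g - α^3*β^2*a*c*e + α^3*β^3*d*e*g + α^3*β^3*c*d*e - α^4*a*b*e + α^4*β*b*d*e + α^4*β*a*e^2 - α^4*β^2*d*e^2) * hQ2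
      + (-β^3*a*e^2 + β^4*a*b*e + 2*α*β^2*a*c*e + α*β^3*b*e^2 - α*β^3*a*b*c - α*β^4*b^2*e - α*β^4*a*c*e - α^2*β*a*c^2 - 2*α^2*β^2*b*c*e - α^2*β^2*a*b*e + α^2*β^3*b^2*c + α^2*β^3*a*e^2 + α^2*β^3*a*c^2 + α^2*β^4*b*c*e + α^3*β*b*c^2 + α^3*β*a*b*c + α^3*β^2*b^2*e - α^3*β^2*a*c*e - α^3*β^3*b*e^2 - α^3*β^3*b*c^2 - α^4*β*b^2*c + α^4*β^2*b*c*e) * hQ3'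
  have hP2 := mul_left_cancel₀ hNb hP
  have hkey : (e - α*f)/(e - β*h)
      = ((a - α*b) * ((β*e - α*c) * ((β^2 - α^2)*d + β*(α^2-1)*g - α*(β^2-1)*e)))
        / ((a - β*d) * ((β*g - α*e) * ((β^2 - α^2)*b + β*(α^2-1)*e - α*(β^2-1)*c))) := by
    rw [div_eq_div_iff hD11 (mul_ne_zero hD00 (mul_ne_zero hge hNb))]
    linear_combination hP2
  rw [hw11, hw00, hw10, hw01]
  rw [show (b - α * c) / (b - β * e) - 1 = (β*e - α*c)/(b - β*e) by field_simp; ring,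
      show (d - α * e) / (d - β * g) - 1 = (β*g - α*e)/(d - β*g) by field_simp; ring,
      show (b - α * c) / (b - β * e) - (α ^ 2 - 1) / (β ^ 2 - 1)
        = ((β^2 - α^2)*b + β*(α^2-1)*e - α*(β^2-1)*c) / ((b - β*e)*(β^2-1)) by field_simp; ring,
      show (d - α * e) / (d - β * g) - (α ^ 2 - 1) / (β ^ 2 - 1)
        = ((β^2 - α^2)*d + β*(α^2-1)*g - α*(β^2-1)*e) / ((d - β*g)*(β^2-1)) by field_simp; ring,
      hkey]
  rw [frac_aux _ _ _ _ _ _ _ _ _ hD00 hD10 hD01 hb2 hge hNb]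
end

section
/- Suppose x : ℤ×ℤ → ℂ satisfies the Q1_δ lattice equation for all l,m (with all relevant denominators nonzero). Define v_{l,m} := -(x_{l,m} - x_{l+1,m} - αδ)/(x_{l,m} - x_{l,m+1} - βδ). Then v satisfies v_{l+1,m+1} = v_{l,m} (v_{l+1,m} + 1)(v_{l,m+1} + α/β) / ((v_{l+1,m} + α/β)(v_{l,m+1} + 1)) wherever all denominators are nonzero. -/
set_option maxHeartbeats 2000000 in
set_option maxRecDepth 4000 in
/-- the variable v_{l,m} = -(x_{l,m}-x_{l+1,m}-αδ)/(x_{l,m}-x_{l,m+1}-βδ)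
built from a solution of Q1_δ satisfies equation (3.12b) of the paper. -/
theorem q1_v_transformation (α β δ : ℂ) (hα : α ≠ 0) (hβ : β ≠ 0) (hαβ : α ≠ β)
    (x v : ℤ → ℤ → ℂ)
    (hQ1 : ∀ l m : ℤ,
      α * (x l m - x l (m+1)) * (x (l+1) m - x (l+1) (m+1))
        - β * (x l m - x (l+1) m) * (x l (m+1) - x (l+1) (m+1))
        + δ ^ 2 * α * β * (α - β) = 0)
    (hv : ∀ l m : ℤ, x l m - x l (m+1) - β * δ ≠ 0 ∧
      v l m = -((x l m - x (l+1) m - α * δ) / (x l m - x l (m+1) - β * δ)))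
    (l m : ℤ)
    (hd1 : v (l+1) m + α / β ≠ 0)
    (hd2 : v l (m+1) + 1 ≠ 0) :
    v (l+1) (m+1) =
      v l m * ((v (l+1) m + 1) * (v l (m+1) + α / β)) /
        ((v (l+1) m + α / β) * (v l (m+1) + 1)) := by
  obtain ⟨hq1, hv1⟩ := hv l m
  obtain ⟨hq3, hv3⟩ := hv (l+1) m
  obtain ⟨hq2, hv2⟩ := hv l (m+1)
  obtain ⟨hq4, hv4⟩ := hv (l+1) (m+1)
  have hA : (α * (x (l+1) m - x (l+1) (m+1) - β * δ) - β * (x (l+1) m - x (l+1+1) m - α * δ)) ≠ 0 := by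
    intro h
    apply hd1
    rw [hv3]
    rw [← neg_div, div_add_div _ _ hq3 hβ, div_eq_zero_iff]
    left
    linear_combination h
  have hB : ((x l (m+1) - x l (m+1+1) - β * δ) - (x l (m+1) - x (l+1) (m+1) - α * δ)) ≠ 0 := by
    intro h
    apply hd2
    rw [hv2]
    have hx : (x l (m+1) - x (l+1) (m+1) - α * δ) = (x l (m+1) - x l (m+1+1) - β * δ) := by linear_combination -h
    rw [hx, div_self hq2]
    ring
  have key : (x (l+1) (m+1) - x (l+1+1) (m+1) - α * δ) * (x l m - x l (m+1) - β * δ) * ((α * (x (l+1) m - x (l+1) (m+1) - β * δ) - β * (x (l+1) m - x (l+1+1) m - α * δ)) * ((x l (m+1) - x l (m+1+1) - β * δ) - (x l (m+1) - x (l+1) (m+1) - α * δ)))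
      = (x l m - x (l+1) m - α * δ) * (x (l+1) (m+1) - x (l+1) (m+1+1) - β * δ) * (((x (l+1) m - x (l+1) (m+1) - β * δ) - (x (l+1) m - x (l+1+1) m - α * δ)) * (α * (x l (m+1) - x l (m+1+1) - β * δ) - β * (x l (m+1) - x (l+1) (m+1) - α * δ))) := by
    linear_combination (x l m - x l (m+1) - β * δ) * ((x l (m+1) - x l (m+1+1) - β * δ) - (x l (m+1) - x (l+1) (m+1) - α * δ)) * hQ1 (l+1) m
      - (x l m - x (l+1) m - α * δ) * ((x (l+1) m - x (l+1) (m+1) - β * δ) - (x (l+1) m - x (l+1+1) m - α * δ)) * hQ1 l (m+1)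
      - ((x l (m+1) - x l (m+1+1) - β * δ) - (x l (m+1) - x (l+1) (m+1) - α * δ)) * ((x (l+1) m - x (l+1) (m+1) - β * δ) - (x (l+1) m - x (l+1+1) m - α * δ)) * hQ1 l m
  have h3a : -((x (l+1) m - x (l+1+1) m - α * δ) / (x (l+1) m - x (l+1) (m+1) - β * δ)) + 1 = ((x (l+1) m - x (l+1) (m+1) - β * δ) - (x (l+1) m - x (l+1+1) m - α * δ)) / (x (l+1) m - x (l+1) (m+1) - β * δ) := by
    rw [← neg_div, div_add' _ _ _ hq3]
    congr 1
    ring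
  have h3b : -((x (l+1) m - x (l+1+1) m - α * δ) / (x (l+1) m - x (l+1) (m+1) - β * δ)) + α / β = (α * (x (l+1) m - x (l+1) (m+1) - β * δ) - β * (x (l+1) m - x (l+1+1) m - α * δ)) / (β * (x (l+1) m - x (l+1) (m+1) - β * δ)) := by
    rw [← neg_div, div_add_div _ _ hq3 hβ]
    congr 1 <;> ring
  have h2a : -((x l (m+1) - x (l+1) (m+1) - α * δ) / (x l (m+1) - x l (m+1+1) - β * δ)) + 1 = ((x l (m+1) - x l (m+1+1) - β * δ) - (x l (m+1) - x (l+1) (m+1) - α * δ)) / (x l (m+1) - x l (m+1+1) - β * δ) := by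
    rw [← neg_div, div_add' _ _ _ hq2]
    congr 1
    ring
  have h2b : -((x l (m+1) - x (l+1) (m+1) - α * δ) / (x l (m+1) - x l (m+1+1) - β * δ)) + α / β = (α * (x l (m+1) - x l (m+1+1) - β * δ) - β * (x l (m+1) - x (l+1) (m+1) - α * δ)) / (β * (x l (m+1) - x l (m+1+1) - β * δ)) := by
    rw [← neg_div, div_add_div _ _ hq2 hβ]
    congr 1 <;> ring
  rw [hv4, hv1, hv3, hv2, h3a, h3b, h2a, h2b]
  rw [div_mul_div_comm, div_mul_div_comm, ← neg_div, ← neg_div, div_mul_div_comm]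
  rw [div_div_eq_mul_div, div_mul_eq_mul_div, div_div]
  rw [div_eq_div_iff hq4 (by
    exact mul_ne_zero (mul_ne_zero hq1 (mul_ne_zero hq3 (mul_ne_zero hβ hq2)))
      (mul_ne_zero hA hB))]
  linear_combination (-(β * (x (l+1) m - x (l+1) (m+1) - β * δ) * (x l (m+1) - x l (m+1+1) - β * δ))) * key
end

section
/- Suppose x : ℤ×ℤ → ℂ satisfies the A1_{δ=0} lattice equation for all l,m (with all relevant denominators nonzero). Define u_{l,m} := -(x_{l,m} + x_{l+1,m})/(x_{l,m} + x_{l,m+1}). Then u satisfies u_{l+1,m+1} = u_{l,m} (u_{l+1,m} + 1)(u_{l,m+1} + α/β) / ((u_{l,m+1} + 1)(u_{l+1,m} + α/β)) wherever all denominators are nonzero. -/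
set_option maxHeartbeats 1000000 in
set_option maxRecDepth 4000 in
/-- the variable u_{l,m} = -(x_{l,m}+x_{l+1,m})/(x_{l,m}+x_{l,m+1})
built from a solution of A1_{δ=0} satisfies equation (3.17) of the paper. -/
theorem a1_delta0_u_transformation (α β : ℂ) (hα : α ≠ 0) (hβ : β ≠ 0) (hαβ : α ≠ β)
    (x u : ℤ → ℤ → ℂ)
    (hA1 : ∀ l m : ℤ,
      α * (x l m + x l (m+1)) * (x (l+1) m + x (l+1) (m+1))
        - β * (x l m + x (l+1) m) * (x l (m+1) + x (l+1) (m+1)) = 0)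
    (hu : ∀ l m : ℤ, x l m + x l (m+1) ≠ 0 ∧
      u l m = -((x l m + x (l+1) m) / (x l m + x l (m+1))))
    (l m : ℤ)
    (hd1 : u l (m+1) + 1 ≠ 0)
    (hd2 : u (l+1) m + α / β ≠ 0) :
    u (l+1) (m+1) =
      u l m * ((u (l+1) m + 1) * (u l (m+1) + α / β)) /
        ((u l (m+1) + 1) * (u (l+1) m + α / β)) := by
  obtain ⟨hAC, h00⟩ := hu l m
  obtain ⟨hBD, h10⟩ := hu (l+1) m
  obtain ⟨hCG, h01⟩ := hu l (m+1)
  obtain ⟨hDH, h11⟩ := hu (l+1) (m+1)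
  have E1 := hA1 l m
  have E2 := hA1 (l+1) m
  have E3 := hA1 l (m+1)
  set A := x l m with hA
  set B := x (l+1) m with hB
  set C := x l (m+1) with hC
  set D := x (l+1) (m+1) with hD
  set E := x (l+1+1) m with hE
  set F := x (l+1+1) (m+1) with hF
  set G := x l (m+1+1) with hG
  set H := x (l+1) (m+1+1) with hH
  rw [h01] at hd1
  rw [h10] at hd2
  rw [h00, h01, h10, h11]
  clear h00 h01 h10 h11 hA1
  clear_value A B C D E F G H
  clear hu hA hB hC hD hE hF hG hH x
  have hGD : G - D ≠ 0 := by
    intro h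
    apply hd1
    field_simp
    first | linear_combination h | linear_combination -h | linear_combination 2*h | linear_combination -2*h
  have hK : α*(B+D) - β*(B+E) ≠ 0 := by
    intro h
    apply hd2
    field_simp
    first | linear_combination h | linear_combination -h | linear_combination 2*h | linear_combination -2*h
  by_cases hDF : D + F = 0
  · have h2 : α*(B+D)*(E+F) = 0 := by linear_combination E2 + (β*(B+E))*hDF
    rw [mul_eq_zero, mul_eq_zero] at h2
    have hEF : E + F = 0 := by
      rcases h2 with (h2|h2)|h2
      · exact absurd h2 hα
      · exact absurd h2 hBD
      · exact h2
    have hDE : D = E := by linear_combination hDF - hEF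
    have h1 : -((B+E)/(B+D)) + 1 = 0 := by rw [← hDE]; field_simp; ring
    rw [hDF, h1]
    rw [zero_mul, mul_zero, zero_div, zero_div, neg_zero]
  · have k2 : (α*(B+D)-β*(B+E))*(D+F) = α*(B+D)*(D-E) := by linear_combination E2
    have hDE : D - E ≠ 0 := fun h =>
      mul_ne_zero hK hDF (by rw [k2, h, mul_zero])
    have key : (D+F)*(A+C)*(G-D)*(α*(B+D)-β*(B+E))
        = (A+B)*(D-E)*(α*(C+G)-β*(C+D))*(D+H) := by
      linear_combination ((A+C)*(G-D)) * E2 - ((A+B)*(D-E)) * E3 + ((G-D)*(D-E)) * E1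
    have e1 : -((B+E)/(B+D)) + 1 = (D-E)/(B+D) := by field_simp; ring
    have e2 : -((C+D)/(C+G)) + α/β = (α*(C+G)-β*(C+D))/(β*(C+G)) := by
      field_simp; ring
    have e3 : -((C+D)/(C+G)) + 1 = (G-D)/(C+G) := by field_simp; ring
    have e4 : -((B+E)/(B+D)) + α/β = (α*(B+D)-β*(B+E))/(β*(B+D)) := by
      field_simp; ring
    rw [e1, e2, e3, e4]
    have hb1 : (D-E)/(B+D) ≠ 0 := div_ne_zero hDE hBD
    have hb2 : (G-D)/(C+G) ≠ 0 := div_ne_zero hGD hCG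
    have hb3 : (α*(B+D)-β*(B+E))/(β*(B+D)) ≠ 0 := div_ne_zero hK (mul_ne_zero hβ hBD)
    rw [eq_div_iff (mul_ne_zero hb2 hb3)]
    field_simp
    first
    | linear_combination (β*(B+D)*(C+G)) * key
    | linear_combination (-(β*(B+D)*(C+G))) * key
    | linear_combination (β^2*(B+D)*(C+G)) * key
    | linear_combination (-(β^2*(B+D)*(C+G))) * key
    | linear_combination key
    | linear_combination -key
    | linear_combination β * key
    | linear_combination -(β * key)
end

section
/- Suppose w : ℤ×ℤ → ℂ satisfies w_{l+1,m+1} = w_{l,m} (w_{l+1,m} + 1)(w_{l,m+1} + γ) / ((w_{l+1,m} + γ)(w_{l,m+1} + 1)) for all l,m, and satisfies the periodicity condition w_{l,m+1} = k / w_{l+1,m} for a nonzero constant k. Then the sequence y_n := w_{n,0} satisfies the QRT map y_{n+1} y_{n-1} = (k/γ) (y_n + γ)(y_n + k) / ((y_n + 1)(y_n + k/γ)) for all n ≥ 1, wherever all denominators are nonzero and all w values are nonzero. -/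
/-- the periodic reduction w_{l,m+1} = k/w_{l+1,m} of the one-parameter
lattice equation (3.19) yields the QRT map (3.20) for y_n := w_{n,0}. -/
theorem periodic_reduction_to_qrt (γ k : ℂ) (hγ : γ ≠ 0) (hk : k ≠ 0)
    (w : ℤ → ℤ → ℂ)
    (hlat : ∀ l m : ℤ, (w (l+1) m + γ) * (w l (m+1) + 1) ≠ 0 ∧
      w (l+1) (m+1) =
        w l m * ((w (l+1) m + 1) * (w l (m+1) + γ)) /
          ((w (l+1) m + γ) * (w l (m+1) + 1)))
    (hper : ∀ l m : ℤ, w l (m+1) = k / w (l+1) m)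
    (hnz : ∀ l m : ℤ, w l m ≠ 0)
    (n : ℤ) (hn : 1 ≤ n)
    (hd1 : w n 0 + 1 ≠ 0) (hd2 : w n 0 + k / γ ≠ 0) :
    w (n+1) 0 * w (n-1) 0 =
      (k / γ) * ((w n 0 + γ) * (w n 0 + k)) / ((w n 0 + 1) * (w n 0 + k / γ)) := by
  have hn1 : n - 1 + 1 = n := by ring
  obtain ⟨hD, heq⟩ := hlat (n - 1) 0
  rw [hn1] at hD heq
  have hpa : w (n-1) (0+1) = k / w n 0 := by
    have := hper (n-1) 0; rwa [hn1] at this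
  have hpb : w n (0+1) = k / w (n+1) 0 := hper n 0
  rw [hpa] at hD heq
  rw [hpb] at heq
  set a := w (n-1) 0 with ha
  set b := w n 0 with hb
  set c := w (n+1) 0 with hc
  have hbne : b ≠ 0 := hnz n 0
  have hcne : c ≠ 0 := hnz (n+1) 0
  have hane : a ≠ 0 := hnz (n-1) 0
  have h1 : b + γ ≠ 0 := fun h => hD (by rw [h]; ring)
  have h2 : k / b + 1 ≠ 0 := fun h => hD (by rw [h]; ring)
  have h3 : b + k ≠ 0 := by
    intro h
    apply h2
    field_simp
    linear_combination h
  have h4 : γ * b + k ≠ 0 := by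
    intro h
    apply hd2
    field_simp
    linear_combination h
  -- heq : k / c = a * ((b + 1) * (k / b + γ)) / ((b + γ) * (k / b + 1))
  have hDen : (b + γ) * (k / b + 1) ≠ 0 := hD
  have h3' : k + b ≠ 0 := by rwa [add_comm]
  field_simp at heq
  rw [eq_div_iff (mul_ne_zero hd1 hd2)]
  field_simp
  linear_combination (-1 : ℂ) * heq
end

section
/- Suppose x : ℤ×ℤ → ℂ satisfies the H3_{δ=0} lattice equation for all l,m (with all relevant denominators nonzero), and let w_{l+1,m+1} := x_{l,m}/(α x_{l,m+1} - β x_{l+1,m}). Then w_{l+1,m+1} can be expressed in terms of values on neighbouring quadrilaterals as: w_{l+1,m+1} = x_{l,m}(β x_{l,m} - α x_{l-1,m+1})(α x_{l,m} - β x_{l+1,m-1}) / (α x_{l-1,m}(α x_{l,m} - β x_{l-1,m+1})(α x_{l,m} - β x_{l+1,m-1}) - β x_{l,m-1}(β x_{l,m} - α x_{l-1,m+1})(β x_{l,m} - α x_{l+1,m-1})), wherever all denominators are nonzero. -/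
/-- the expression (3.4)/(3.6) of the paper for
w_{l+1,m+1} = x_{l,m}/(α x_{l,m+1} - β x_{l+1,m}) in terms of values on neighbouring
quadrilaterals of a solution of H3_{δ=0}. -/
theorem h3_w_neighbouring (α β : ℂ) (hα : α ≠ 0) (hβ : β ≠ 0)
    (hαβ : α ≠ β) (hαβ' : α ≠ -β)
    (x w : ℤ → ℤ → ℂ)
    (hH3 : ∀ l m : ℤ, β * x (l+1) m - α * x l (m+1) ≠ 0 ∧
      x (l+1) (m+1) =
        x l m * (α * x (l+1) m - β * x l (m+1)) / (β * x (l+1) m - α * x l (m+1)))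
    (hw : ∀ l m : ℤ, α * x l (m+1) - β * x (l+1) m ≠ 0 ∧
      w (l+1) (m+1) = x l m / (α * x l (m+1) - β * x (l+1) m))
    (l m : ℤ)
    (hd : α * x (l-1) m * (α * x l m - β * x (l-1) (m+1)) * (α * x l m - β * x (l+1) (m-1))
        - β * x l (m-1) * (β * x l m - α * x (l-1) (m+1)) * (β * x l m - α * x (l+1) (m-1))
          ≠ 0) :
    w (l+1) (m+1) =
      x l m * (β * x l m - α * x (l-1) (m+1)) * (α * x l m - β * x (l+1) (m-1)) /
        (α * x (l-1) m * (α * x l m - β * x (l-1) (m+1)) * (α * x l m - β * x (l+1) (m-1))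
          - β * x l (m-1) * (β * x l m - α * x (l-1) (m+1)) * (β * x l m - α * x (l+1) (m-1))) := by
  have h1 := hH3 (l-1) m
  have h2 := hH3 l (m-1)
  rw [show l - 1 + 1 = l from by ring] at h1
  rw [show m - 1 + 1 = m from by ring] at h2
  obtain ⟨hA, e1⟩ := h1
  obtain ⟨hB, e2⟩ := h2
  obtain ⟨hD, ew⟩ := hw l m
  rw [e1, e2] at hD ew
  rw [ew]
  field_simp at hD ⊢
  field_simp at hd
  have hQ : x l m * β - α * x (l - 1) (m + 1) ≠ 0 := by rw [mul_comm]; exact hA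
  have hd' : α * x (l - 1) m * (α * x l m - β * x (l - 1) (m + 1)) * (α * x l m - β * x (l + 1) (m - 1)) -
        β * (x l m * β - α * x (l - 1) (m + 1)) * x l (m - 1) * (x l m * β - α * x (l + 1) (m - 1)) ≠ 0 := by
    intro h; apply hd; linear_combination h
  rw [div_eq_div_iff (fun h => hD (by rw [h, zero_div])) hd']
  field_simp
  ring
end

section
/- Let γ, k be nonzero complex numbers and suppose y : ℤ → ℂ satisfies the QRT map y_{n+1} y_{n-1} = (k/γ)(y_n + γ)(y_n + k)/((y_n + 1)(y_n + k/γ)) with all values nonzero and denominators nonzero. Define w_{l,m} for l + m fixed parity via w_{l,0} := y_l and w_{l,m+1} := k/w_{l+1,m}. Then w satisfies the lattice equation w_{l+1,m+1} = w_{l,m}(w_{l+1,m} + 1)(w_{l,m+1} + γ)/((w_{l+1,m} + γ)(w_{l,m+1} + 1)) on the quadrilaterals where all expressions are defined. -/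
set_option maxHeartbeats 1600000

/-- The QRT predicate for a bi-infinite sequence. -/
def QRTseq (γ k : ℂ) (f : ℤ → ℂ) : Prop :=
  ∀ n : ℤ, f n ≠ 0 ∧ (f n + 1) * (f n + k / γ) ≠ 0 ∧
    f (n+1) * f (n-1) =
      (k / γ) * ((f n + γ) * (f n + k)) / ((f n + 1) * (f n + k / γ))

lemma qrt_extra (γ k : ℂ) (hγ : γ ≠ 0) (hk : k ≠ 0) (f : ℤ → ℂ)
    (hf : QRTseq γ k f) (n : ℤ) : (f n + γ) * (f n + k) ≠ 0 := by
  obtain ⟨h0, hd, hrel⟩ := hf n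
  obtain ⟨h1, -, -⟩ := hf (n+1)
  obtain ⟨h2, -, -⟩ := hf (n-1)
  intro h
  apply mul_ne_zero h1 h2
  rw [hrel, h, mul_zero, zero_div]

lemma qrt_shift (γ k : ℂ) (hγ : γ ≠ 0) (hk : k ≠ 0) (f g : ℤ → ℂ) (d : ℤ)
    (hg : QRTseq γ k g) (hf : ∀ n : ℤ, f n = k / g (n + d)) :
    QRTseq γ k f := by
  intro n
  obtain ⟨hb0, hbd, hrel⟩ := hg (n + d)
  have hne := qrt_extra γ k hγ hk g hg (n + d)
  obtain ⟨hp, -, -⟩ := hg (n + d + 1)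
  obtain ⟨hq, -, -⟩ := hg (n + d - 1)
  set b := g (n + d) with hbdef
  have hb1 : b + 1 ≠ 0 := fun h => hbd (by rw [h, zero_mul])
  have hb2 : b + k / γ ≠ 0 := fun h => hbd (by rw [h, mul_zero])
  have hbγ : b + γ ≠ 0 := fun h => hne (by rw [h, zero_mul])
  have hbk : b + k ≠ 0 := fun h => hne (by rw [h, mul_zero])
  have hfn : f n = k / b := hf n
  have hfn0 : f n ≠ 0 := by rw [hfn]; exact div_ne_zero hk hb0
  have hbγ2 : b * γ + k ≠ 0 := by
    intro h; apply hb2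
    have e : b + k / γ = (b * γ + k) / γ := by field_simp
    rw [e, h, zero_div]
  have hu1 : k / b + 1 ≠ 0 := by
    intro h; apply hbk
    rw [div_add' _ _ _ hb0, div_eq_zero_iff] at h
    rcases h with h | h
    · linear_combination h
    · exact absurd h hb0
  have hu2 : k / b + k / γ ≠ 0 := by
    intro h; apply hbγ
    rw [div_add_div _ _ hb0 hγ, div_eq_zero_iff] at h
    rcases h with h | h
    · rcases mul_eq_zero.1 (show k * (γ + b) = 0 by linear_combination h) with h' | h'
      · exact absurd h' hk
      · linear_combination h'
    · exact absurd h (mul_ne_zero hb0 hγ)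
  have hud : (k / b + 1) * (k / b + k / γ) ≠ 0 := mul_ne_zero hu1 hu2
  refine ⟨hfn0, by rw [hfn]; exact hud, ?_⟩
  have e1 : f (n+1) = k / g (n + d + 1) := by rw [hf (n+1)]; ring_nf
  have e2 : f (n-1) = k / g (n + d - 1) := by rw [hf (n-1)]; ring_nf
  rw [e1, e2, hfn, div_mul_div_comm, hrel]
  have hD1 : k / γ * ((b + γ) * (b + k)) / ((b + 1) * (b + k / γ)) ≠ 0 :=
    div_ne_zero (mul_ne_zero (div_ne_zero hk hγ) hne) hbd
  clear_value b
  rw [div_eq_div_iff hD1 hud]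
  field_simp
  ring

/-- converse of the periodic reduction: a solution of the QRT map (3.20)
lifts, via w_{l,0} = y_l and w_{l,m+1} = k/w_{l+1,m}, to a solution of the one-parameter
lattice equation (3.19). -/
theorem qrt_lifts_to_lattice (γ k : ℂ) (hγ : γ ≠ 0) (hk : k ≠ 0)
    (y : ℤ → ℂ) (hy : ∀ n : ℤ, y n ≠ 0)
    (hQRT : ∀ n : ℤ, (y n + 1) * (y n + k / γ) ≠ 0 ∧
      y (n+1) * y (n-1) =
        (k / γ) * ((y n + γ) * (y n + k)) / ((y n + 1) * (y n + k / γ)))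
    (w : ℤ → ℤ → ℂ)
    (hw0 : ∀ l : ℤ, w l 0 = y l)
    (hwrec : ∀ l m : ℤ, w l (m+1) = k / w (l+1) m)
    (l m : ℤ)
    (hd : (w (l+1) m + γ) * (w l (m+1) + 1) ≠ 0) :
    w (l+1) (m+1) =
      w l m * ((w (l+1) m + 1) * (w l (m+1) + γ)) /
        ((w (l+1) m + γ) * (w l (m+1) + 1)) := by
  have hQ : ∀ m : ℤ, QRTseq γ k (fun l => w l m) := by
    intro m
    induction m using Int.induction_on with
    | zero =>
      intro n
      dsimp only
      exact ⟨by rw [hw0]; exact hy n, by rw [hw0]; exact (hQRT n).1,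
        by simp only [hw0]; exact (hQRT n).2⟩
    | succ i ih =>
      exact qrt_shift γ k hγ hk _ _ 1 ih (fun n => hwrec n i)
    | pred i ih =>
      apply qrt_shift γ k hγ hk _ _ (-1) ih
      intro n
      have h2 : w (n-1) (-(i:ℤ)) = k / w n (-(i:ℤ)-1) := by
        have h1 := hwrec (n-1) (-(i:ℤ)-1)
        rw [show (-(i:ℤ)-1+1) = -(i:ℤ) by ring, show (n-1+1 : ℤ) = n by ring] at h1
        exact h1
      have hnz : w (n-1) (-(i:ℤ)) ≠ 0 := (ih (n-1)).1
      have hB : w n (-(i:ℤ)-1) ≠ 0 := by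
        intro h; rw [h, div_zero] at h2; exact hnz h2
      show w n (-(i:ℤ)-1) = k / w (n + (-1)) (-(i:ℤ))
      rw [show n + (-1 : ℤ) = n - 1 by ring, h2]
      field_simp
  obtain ⟨hb0, hbd, hrel⟩ := hQ m (l+1)
  have ha0 : w l m ≠ 0 := (hQ m l).1
  have hc0 : w (l+2) m ≠ 0 := (hQ m (l+2)).1
  simp only at hb0 hbd hrel ha0 hc0
  rw [show l+1+1 = l+2 by ring, show l+1-1 = l by ring] at hrel
  set a := w l m
  set b := w (l+1) m
  set c := w (l+2) m
  have hwl : w l (m+1) = k / b := hwrec l m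
  have hwl1 : w (l+1) (m+1) = k / c := by
    rw [hwrec (l+1) m, show l+1+1 = l+2 by ring]
  rw [hwl] at hd ⊢
  rw [hwl1]
  have hbγ : b + γ ≠ 0 := fun h => hd (by rw [h, zero_mul])
  have hu1 : k / b + 1 ≠ 0 := fun h => hd (by rw [h, mul_zero])
  have hbk : b + k ≠ 0 := by
    intro h
    apply hu1
    rw [div_add' _ _ _ hb0, div_eq_zero_iff]
    left; linear_combination h
  have key : c * a * ((b+1)*(b+k/γ)) = (k/γ)*((b+γ)*(b+k)) := by
    rw [hrel, div_mul_cancel₀ _ hbd]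
  have key2 : c * a * ((b+1)*(b*γ+k)) = k*((b+γ)*(b+k)) := by
    field_simp at key
    linear_combination key
  rw [div_eq_div_iff hc0 (mul_ne_zero hbγ hu1)]
  field_simp
  linear_combination -key2
end
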